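/- Let G(s) = L + (s/(1−s))W on the complete graph with V vertices, where W is diagonal with unique smallest eigenvalue W_m = 0 and all other entries positive. Let φ(s) > 0 be the unit ground state of G(s). Then the amplitude φ(m)(s) at the marked vertex m is strictly increasing in s on [0,1): d(φ(m)²)/ds > 0. -/

import Mathlib

open Matrix

/-! With `c = s / (1 - s)`, the eigen-equation reads `φ u (V + c W u - λ) = ∑ φ` in every
coordinate. Comparing with `u = m` gives `φ m = φ u (1 + t W u)` for `t = c / (V - λ)`, so the
normalisation forces `φ m ^ 2 = (∑ u, (1 + t W u)⁻²)⁻¹`. Pairing the eigen-equations at two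
parameters shows that `λ` increases strictly with `c` (a discrete Hellmann–Feynman argument);
hence `t` increases, the sum decreases, and `φ m ^ 2` increases. -/

/-- The combinatorial Laplacian of the complete graph on `V` vertices:
`L = V·I − J`, where `J` is the all-ones matrix. -/
def cgL (V : ℕ) : Matrix (Fin V) (Fin V) ℝ :=
  (V : ℝ) • (1 : Matrix (Fin V) (Fin V) ℝ) - Matrix.of (fun _ _ => (1 : ℝ))

/-- The rescaled interpolating Hamiltonian `G(s) = L + (s/(1−s))·W`. -/
noncomputable def cgG (V : ℕ) (W : Fin V → ℝ) (s : ℝ) : Matrix (Fin V) (Fin V) ℝ :=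
  cgL V + (s / (1 - s)) • Matrix.diagonal W

lemma div_one_sub_strictMonoOn : StrictMonoOn (fun s : ℝ => s / (1 - s)) (Set.Iio 1) := by
  intro s₁ hs₁ s₂ hs₂ hs
  have h₁ : 0 < 1 - s₁ := sub_pos.2 hs₁
  have h₂ : 0 < 1 - s₂ := sub_pos.2 hs₂
  simp only
  rw [div_lt_div_iff₀ h₁ h₂]
  nlinarith

section

variable {ι : Type*} [Fintype ι]

/-- Componentwise form of `(N • 1 - J + c • diagonal W) *ᵥ φ = lam • φ`, with `J` the all-ones
matrix. -/
def EigenRelation (N c lam : ℝ) (W φ : ι → ℝ) : Prop :=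
  ∀ u, φ u * (N + c * W u - lam) = ∑ v, φ v

lemma cgG_eigenRelation {V : ℕ} {W φ : Fin V → ℝ} {s lam : ℝ}
    (h : cgG V W s *ᵥ φ = lam • φ) : EigenRelation V (s / (1 - s)) lam W φ := by
  intro u
  have hu := congrFun h u
  simp only [cgG, cgL, add_mulVec, sub_mulVec, smul_mulVec, one_mulVec, mulVec_diagonal,
    Pi.add_apply, Pi.sub_apply, Pi.smul_apply, smul_eq_mul] at hu
  simp only [mulVec, dotProduct, of_apply, one_mul] at hu
  linear_combination hu

noncomputable def invSqSum (W : ι → ℝ) (t : ℝ) : ℝ :=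
  ∑ u, ((1 + t * W u) ^ 2)⁻¹

lemma invSqSum_pos {W : ι → ℝ} {m : ι} (hWm : W m = 0) (t : ℝ) : 0 < invSqSum W t :=
  Finset.sum_pos' (fun u _ => by positivity) ⟨m, Finset.mem_univ m, by simp [hWm]⟩

lemma invSqSum_strictAntiOn {W : ι → ℝ} (hW : ∀ u, 0 ≤ W u) (hWpos : ∃ u, 0 < W u) :
    StrictAntiOn (invSqSum W) (Set.Ici 0) := by
  intro t₁ ht₁ t₂ _ ht
  have hden : ∀ u, 0 < 1 + t₁ * W u := fun u => by nlinarith [mul_nonneg ht₁.out (hW u)]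
  obtain ⟨u₀, hu₀⟩ := hWpos
  refine Finset.sum_lt_sum (fun u _ => ?_) ⟨u₀, Finset.mem_univ u₀, ?_⟩
  · have : t₁ * W u ≤ t₂ * W u := mul_le_mul_of_nonneg_right ht.le (hW u)
    gcongr
    exacts [pow_pos (hden u) 2, (hden u).le]
  · have : t₁ * W u₀ < t₂ * W u₀ := mul_lt_mul_of_pos_right ht hu₀
    gcongr
    exacts [pow_pos (hden u₀) 2, (hden u₀).le]

namespace EigenRelation

variable {N c lam : ℝ} {W φ : ι → ℝ} {m : ι}

lemma lam_lt (h : EigenRelation N c lam W φ) (hWm : W m = 0) (hφ : ∀ u, 0 < φ u) : lam < N := by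
  have hsum : 0 < ∑ v, φ v := Finset.sum_pos (fun u _ => hφ u) ⟨m, Finset.mem_univ m⟩
  have hm := h m
  rw [hWm, mul_zero, add_zero] at hm
  nlinarith [hφ m]

lemma mul_one_add_eq (h : EigenRelation N c lam W φ) (hWm : W m = 0) (hlam : lam ≠ N) (u : ι) :
    φ u * (1 + c / (N - lam) * W u) = φ m := by
  have hN : N - lam ≠ 0 := sub_ne_zero.2 hlam.symm
  have hm := h m
  rw [hWm, mul_zero, add_zero, ← h u] at hm
  field_simp
  linear_combination -hm

lemma sq_eq_inv_invSqSum (h : EigenRelation N c lam W φ) (hWm : W m = 0) (hφ : ∀ u, 0 < φ u)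
    (hnorm : ∑ u, φ u ^ 2 = 1) : φ m ^ 2 = (invSqSum W (c / (N - lam)))⁻¹ := by
  have hratio := h.mul_one_add_eq hWm (h.lam_lt hWm hφ).ne
  have hsq : ∀ u, φ m ^ 2 * ((1 + c / (N - lam) * W u) ^ 2)⁻¹ = φ u ^ 2 := fun u => by
    have hden : 1 + c / (N - lam) * W u ≠ 0 := fun h0 => by
      have := hratio u
      rw [h0, mul_zero] at this
      exact (hφ m).ne' this.symm
    rw [← hratio u, mul_pow, mul_assoc, mul_inv_cancel₀ (pow_ne_zero 2 hden), mul_one]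
  refine eq_inv_of_mul_eq_one_left ?_
  rw [invSqSum, Finset.mul_sum, Finset.sum_congr rfl fun u _ => hsq u, hnorm]

variable {c₁ c₂ lam₁ lam₂ : ℝ} {φ₁ φ₂ : ι → ℝ}

/-- Discrete Hellmann–Feynman: pair each relation with the other eigenvector; the symmetric part
`N • 1 - J` cancels. -/
lemma cross_pairing (h₁ : EigenRelation N c₁ lam₁ W φ₁) (h₂ : EigenRelation N c₂ lam₂ W φ₂) :
    (c₂ - c₁) * ∑ u, W u * (φ₁ u * φ₂ u) = (lam₂ - lam₁) * ∑ u, φ₁ u * φ₂ u := by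
  have hcancel : ∑ u, (φ₁ u * (φ₂ u * (N + c₂ * W u - lam₂))
      - φ₂ u * (φ₁ u * (N + c₁ * W u - lam₁))) = 0 := by
    simp only [h₁ _, h₂ _, Finset.sum_sub_distrib, ← Finset.sum_mul]
    ring
  rw [← sub_eq_zero, Finset.mul_sum, Finset.mul_sum, ← Finset.sum_sub_distrib, ← hcancel]
  exact Finset.sum_congr rfl fun u _ => by ring

lemma lam_lt_lam (h₁ : EigenRelation N c₁ lam₁ W φ₁) (h₂ : EigenRelation N c₂ lam₂ W φ₂)
    (hc : c₁ < c₂) (hW : ∀ u, 0 ≤ W u) (hWpos : ∃ u, 0 < W u)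
    (hφ₁ : ∀ u, 0 < φ₁ u) (hφ₂ : ∀ u, 0 < φ₂ u) : lam₁ < lam₂ := by
  obtain ⟨u₀, hu₀⟩ := hWpos
  have hφφ : ∀ u, 0 < φ₁ u * φ₂ u := fun u => mul_pos (hφ₁ u) (hφ₂ u)
  have hP : 0 < ∑ u, φ₁ u * φ₂ u :=
    Finset.sum_pos (fun u _ => hφφ u) ⟨u₀, Finset.mem_univ u₀⟩
  have hQ : 0 < ∑ u, W u * (φ₁ u * φ₂ u) :=
    Finset.sum_pos' (fun u _ => mul_nonneg (hW u) (hφφ u).le)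
      ⟨u₀, Finset.mem_univ u₀, mul_pos hu₀ (hφφ u₀)⟩
  have := h₁.cross_pairing h₂
  nlinarith [mul_pos (sub_pos.2 hc) hQ]

lemma div_sub_lt_div_sub (h₁ : EigenRelation N c₁ lam₁ W φ₁) (h₂ : EigenRelation N c₂ lam₂ W φ₂)
    (hc₁ : 0 ≤ c₁) (hc : c₁ < c₂) (hWm : W m = 0) (hW : ∀ u, 0 ≤ W u) (hWpos : ∃ u, 0 < W u)
    (hφ₁ : ∀ u, 0 < φ₁ u) (hφ₂ : ∀ u, 0 < φ₂ u) : c₁ / (N - lam₁) < c₂ / (N - lam₂) :=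
  div_lt_div₀ hc (sub_le_sub_left (h₁.lam_lt_lam h₂ hc hW hWpos hφ₁ hφ₂).le N)
    (hc₁.trans hc.le) (sub_pos.2 (h₂.lam_lt hWm hφ₂))

end EigenRelation

end

theorem ground_amplitude_monotone {V : ℕ} (hV : 2 ≤ V) (W : Fin V → ℝ) (m : Fin V)
    (hWm : W m = 0) (hmin : ∀ u : Fin V, u ≠ m → 0 < W u)
    (φ : ℝ → Fin V → ℝ) (lam : ℝ → ℝ)
    (hpos : ∀ s ∈ Set.Ico (0 : ℝ) 1, ∀ u, 0 < φ s u)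
    (hnorm : ∀ s ∈ Set.Ico (0 : ℝ) 1, ∑ u : Fin V, (φ s u) ^ 2 = 1)
    (hEig : ∀ s ∈ Set.Ico (0 : ℝ) 1, (cgG V W s).mulVec (φ s) = lam s • φ s) :
    StrictMonoOn (fun s : ℝ => (φ s m) ^ 2) (Set.Ico (0 : ℝ) 1) := by
  intro s₁ hs₁ s₂ hs₂ hs
  have hW : ∀ u, 0 ≤ W u := fun u =>
    (eq_or_ne u m).elim (fun hu => hu ▸ hWm.ge) (fun hu => (hmin u hu).le)
  obtain ⟨u₀, hu₀⟩ : ∃ u, u ≠ m :=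
    Fintype.exists_ne_of_one_lt_card (by rw [Fintype.card_fin]; omega) m
  have hWpos : ∃ u, 0 < W u := ⟨u₀, hmin u₀ hu₀⟩
  have h₁ := cgG_eigenRelation (hEig s₁ hs₁)
  have h₂ := cgG_eigenRelation (hEig s₂ hs₂)
  have hc₁ : 0 ≤ s₁ / (1 - s₁) := div_nonneg hs₁.1 (sub_nonneg.2 hs₁.2.le)
  have hc : s₁ / (1 - s₁) < s₂ / (1 - s₂) := div_one_sub_strictMonoOn hs₁.2 hs₂.2 hs
  have ht₁ : 0 ≤ s₁ / (1 - s₁) / (V - lam s₁) :=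
    div_nonneg hc₁ (sub_pos.2 (h₁.lam_lt hWm (hpos s₁ hs₁))).le
  have ht := h₁.div_sub_lt_div_sub h₂ hc₁ hc hWm hW hWpos (hpos s₁ hs₁) (hpos s₂ hs₂)
  show φ s₁ m ^ 2 < φ s₂ m ^ 2
  rw [h₁.sq_eq_inv_invSqSum hWm (hpos s₁ hs₁) (hnorm s₁ hs₁),
    h₂.sq_eq_inv_invSqSum hWm (hpos s₂ hs₂) (hnorm s₂ hs₂),
    inv_lt_inv₀ (invSqSum_pos hWm _) (invSqSum_pos hWm _)]
  exact invSqSum_strictAntiOn hW hWpos ht₁ (ht₁.trans ht.le) ht
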